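/- Let G be a mixed graph with vertices t, y and sets B, Z ⊆ V \ {t, y} with B ∩ Z = ∅. Suppose t is d-separated from Z in G (unconditionally). If there is a path from t to some b ∈ B in G_underline(t) that is active given Z, then there is a path from t to some member of B in G_underline(t) that is active given the empty set. Contrapositive: if t is d-separated from B (unconditionally) in G_underline(t) and t is d-separated from Z in G, then t is d-separated from B given Z in G_underline(t)—this implication requires the collider-unblocking argument: any Z-active path from t to b that is blocked unconditionally must be blocked at a collider with a descendant in Z, and following the descendant path yields an unconditionally active path from t to a member of Z, contradiction. -/

import Mathlib

/-- A mixed graph: directed edges plus symmetric bi-directed edges. -/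
structure MixedGraph (V : Type) where
  dir : V → V → Prop
  bi : V → V → Prop
  bi_symm : ∀ {u v}, bi u v → bi v u

/-- Orientation of an edge as traversed along a path. -/
inductive EKind | fw | bw | bd
  deriving DecidableEq

namespace MixedGraph

variable {V : Type}

/-- A step of a path: source vertex, edge kind, target vertex. -/
abbrev Step (V : Type) := V × EKind × V

/-- Whether a step is an actual edge of the graph. -/
def stepOK (G : MixedGraph V) : Step V → Prop
  | (u, .fw, v) => G.dir u v
  | (u, .bw, v) => G.dir v u
  | (u, .bd, v) => G.bi u v

/-- An edge of this kind has an arrowhead at the target of the step. -/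
def headArrow : EKind → Prop
  | .fw => True
  | .bw => False
  | .bd => True

/-- An edge of this kind has an arrowhead at the source of the step. -/
def tailArrow : EKind → Prop
  | .fw => False
  | .bw => True
  | .bd => True

/-- Consecutive steps must share their endpoint vertices. -/
def chainOK : List (Step V) → Prop
  | [] => True
  | [_] => True
  | (_, _, b) :: (c, k, d) :: rest => b = c ∧ chainOK ((c, k, d) :: rest)

/-- The vertex sequence of a path starting at `u`. -/
def verts (u : V) (steps : List (Step V)) : List V :=
  u :: steps.map (fun s => s.2.2)

/-- `steps` is a path from `u` to `v` in the mixed graph `G`: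
a nonempty sequence of edges with matching endpoints and distinct vertices. -/
structure IsPath (G : MixedGraph V) (u v : V) (steps : List (Step V)) : Prop where
  nonempty : steps ≠ []
  startOK : (steps.head?).map (fun s => s.1) = some u
  endOK : (steps.getLast?).map (fun s => s.2.2) = some v
  chain : chainOK steps
  edges : ∀ s ∈ steps, G.stepOK s
  nodup : (verts u steps).Nodup

/-- The interior vertices of the path that are colliders: both incident path
edges have an arrowhead at the vertex. -/
def colliders : List (Step V) → Set V
  | (_, k, b) :: (c, k', d) :: rest =>
      {w | w = b ∧ headArrow k ∧ tailArrow k'} ∪ colliders ((c, k', d) :: rest)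
  | _ => ∅

/-- All interior vertices of the path. -/
def interior : List (Step V) → Set V
  | (_, _, b) :: (c, k', d) :: rest => {b} ∪ interior ((c, k', d) :: rest)
  | _ => ∅

/-- `v` is `u` or a directed descendant of `u`. -/
def desc (G : MixedGraph V) (u v : V) : Prop := Relation.ReflTransGen G.dir u v

/-- A path is active (unblocked) given a conditioning set `S`: every interior
non-collider is outside `S`, and every collider is in `S` or has a directed
descendant in `S`. -/
def Active (G : MixedGraph V) (S : Set V) (steps : List (Step V)) : Prop :=
  (∀ w ∈ interior steps \ colliders steps, w ∉ S) ∧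
  (∀ w ∈ colliders steps, ∃ d ∈ S, G.desc w d)

/-- d-separation of vertex sets: every path from `V₁` to `V₂` is blocked by `V₃`. -/
def dSep (G : MixedGraph V) (V₁ V₂ V₃ : Set V) : Prop :=
  ∀ u ∈ V₁, ∀ v ∈ V₂, ∀ steps, G.IsPath u v steps → ¬ G.Active V₃ steps

/-- The directed part of the graph is acyclic. -/
def Acyclic (G : MixedGraph V) : Prop := ∀ v, ¬ Relation.TransGen G.dir v v

/-- The graph `G` with all directed edges out of `t` removed. -/
def under (G : MixedGraph V) (t : V) : MixedGraph V where
  dir u v := G.dir u v ∧ u ≠ t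
  bi := G.bi
  bi_symm := fun h => G.bi_symm h

end MixedGraph

namespace MGProof
open MixedGraph

variable {V : Type}

/-- A structured walk predicate equivalent to the path data. -/
inductive W (H : MixedGraph V) : V → List (Step V) → V → Prop
  | nil (v : V) : W H v [] v
  | cons {u x v : V} {k : EKind} {l : List (Step V)} :
      H.stepOK (u, k, x) → W H x l v → W H u ((u, k, x) :: l) v

lemma W_append {H : MixedGraph V} {u w v : V} {l₁ l₂ : List (Step V)}
    (h1 : W H u l₁ w) (h2 : W H w l₂ v) : W H u (l₁ ++ l₂) v := by
  induction h1 with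
  | nil => simpa
  | cons hs _ ih => exact W.cons hs (ih h2)

lemma W_mem_target {H : MixedGraph V} {u v : V} {l : List (Step V)}
    (h : W H u l v) (hne : l ≠ []) : v ∈ l.map (fun s => s.2.2) := by
  induction h with
  | nil => simp at hne
  | cons hs h ih =>
    cases h with
    | nil => simp
    | cons hs' h' =>
      simp only [List.map_cons, List.mem_cons]
      right
      simpa using ih (by simp)

lemma W_chain {H : MixedGraph V} {u v : V} {l : List (Step V)}
    (h : W H u l v) : chainOK l := by
  induction h with
  | nil => trivial
  | cons hs h ih =>
    cases h with
    | nil => trivial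
    | cons hs' h' => exact ⟨rfl, ih⟩

lemma W_edges {H : MixedGraph V} {u v : V} {l : List (Step V)}
    (h : W H u l v) : ∀ s ∈ l, H.stepOK s := by
  induction h with
  | nil => simp
  | cons hs h ih =>
    intro s hs'
    rcases List.mem_cons.mp hs' with rfl | hm
    · exact hs
    · exact ih s hm

lemma W_end {H : MixedGraph V} {u v : V} {l : List (Step V)}
    (h : W H u l v) (hne : l ≠ []) :
    (l.getLast?).map (fun s => s.2.2) = some v := by
  induction h with
  | nil => simp at hne
  | cons hs h ih =>
    cases h with
    | nil => simp
    | cons hs' h' =>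
      rw [List.getLast?_cons_cons]
      exact ih (by simp)

lemma W_isPath {H : MixedGraph V} {u v : V} {l : List (Step V)}
    (h : W H u l v) (hne : l ≠ []) (hnd : (verts u l).Nodup) :
    H.IsPath u v l := by
  refine ⟨hne, ?_, W_end h hne, W_chain h, W_edges h, hnd⟩
  cases h with
  | nil => simp at hne
  | cons hs h => simp

lemma isPath_W {H : MixedGraph V} :
    ∀ (l : List (Step V)) (u v : V), H.IsPath u v l → W H u l v := by
  intro l
  induction l with
  | nil => intro u v h; exact absurd rfl h.nonempty
  | cons s rest ih =>
    intro u v h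
    obtain ⟨a, k, x⟩ := s
    have ha : a = u := by have := h.startOK; simpa using this
    subst ha
    cases rest with
    | nil =>
      have hv : x = v := by have := h.endOK; simpa using this
      subst hv
      exact W.cons (h.edges _ (by simp)) (W.nil _)
    | cons s' rest' =>
      obtain ⟨c, k', d⟩ := s'
      have hch := h.chain
      have hc : x = c := hch.1
      subst hc
      refine W.cons (h.edges _ (by simp)) (ih x v ?_)
      refine ⟨by simp, by simp, ?_, hch.2, fun s hs => h.edges s (by simp [hs]), ?_⟩
      · have := h.endOK; rwa [List.getLast?_cons_cons] at this
      · have := h.nodup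
        simp only [verts, List.map_cons] at this ⊢
        exact this.of_cons

lemma colliders_cons_sub {x : V} (s : Step V) (l : List (Step V))
    (hx : x ∈ colliders l) : x ∈ colliders (s :: l) := by
  cases l with
  | nil => simp [colliders] at hx
  | cons s' rest =>
    obtain ⟨a, k, b⟩ := s
    obtain ⟨c, k', d⟩ := s'
    exact Set.mem_union_right _ hx

lemma colliders_prefix_sub :
    ∀ (P Q : List (Step V)) (x : V), x ∈ colliders P → x ∈ colliders (P ++ Q)
  | [], _, _, h => by simp [colliders] at h
  | [s], _, _, h => by obtain ⟨a, k, b⟩ := s; simp [colliders] at h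
  | (a, k, b) :: (c, k', d) :: rest, Q, x, h => by
    rcases h with h | h
    · exact Set.mem_union_left _ h
    · exact Set.mem_union_right _ (colliders_prefix_sub ((c, k', d) :: rest) Q x h)

lemma colliders_fw_empty :
    ∀ (Q : List (Step V)) (x : V), (∀ st ∈ Q, st.2.1 = EKind.fw) → x ∉ colliders Q
  | [], _, _, h => by simp [colliders] at h
  | [s], _, _, h => by obtain ⟨a, k, b⟩ := s; simp [colliders] at h
  | (a, k, b) :: (c, k', d) :: rest, x, hfw, h => by
    have hk' : k' = EKind.fw := hfw (c, k', d) (by simp)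
    subst hk'
    rcases h with ⟨_, _, ht⟩ | h
    · exact ht
    · exact colliders_fw_empty ((c, EKind.fw, d) :: rest) x
        (fun st hst => hfw st (List.mem_cons_of_mem _ hst)) h

lemma colliders_append_fw :
    ∀ (L Q : List (Step V)) (x : V), (∀ st ∈ Q, st.2.1 = EKind.fw) →
      x ∈ colliders (L ++ Q) → x ∈ colliders L
  | [], Q, x, hfw, h => absurd h (colliders_fw_empty Q x hfw)
  | [s], Q, x, hfw, h => by
    obtain ⟨a, k, b⟩ := s
    cases Q with
    | nil => simpa using h
    | cons q Q' =>
      obtain ⟨c, k', d⟩ := q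
      have hk' : k' = EKind.fw := hfw (c, k', d) (by simp)
      subst hk'
      rw [List.singleton_append] at h
      rcases h with ⟨_, _, ht⟩ | h
      · exact ht.elim
      · exact absurd h (colliders_fw_empty _ x hfw)
  | (a, k, b) :: (c, k', d) :: rest, Q, x, hfw, h => by
    rcases h with h | h
    · exact Set.mem_union_left _ h
    · exact Set.mem_union_right _ (colliders_append_fw ((c, k', d) :: rest) Q x hfw h)

lemma rt_chain {r : V → V → Prop} {a b : V} (h : Relation.ReflTransGen r a b) :
    ∃ l, List.Chain r a l ∧ (a :: l).getLast? = some b := by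
  induction h using Relation.ReflTransGen.head_induction_on with
  | refl => exact ⟨[], List.Chain.nil, by simp⟩
  | head hr _ ih =>
    obtain ⟨l, hc, hl⟩ := ih
    exact ⟨_ :: l, List.Chain.cons hr hc, by rwa [List.getLast?_cons_cons]⟩

lemma chain_suffix {r : V → V → Prop} :
    ∀ (l : List V) (a c : V), List.Chain r a l → c ∈ l →
      ∃ l₂, List.Chain r c l₂ ∧ (c :: l₂).Sublist l ∧ (c :: l₂).getLast? = l.getLast?
  | [], _, _, _, hc => by simp at hc
  | x :: l, a, c, hch, hc => by
    rcases List.mem_cons.mp hc with rfl | hc'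
    · exact ⟨l, (List.chain_cons.mp hch).2, List.Sublist.refl _, rfl⟩
    · obtain ⟨l₂, h1, h2, h3⟩ := chain_suffix l x c (List.chain_cons.mp hch).2 hc'
      refine ⟨l₂, h1, h2.trans (List.sublist_cons_self _ _), ?_⟩
      rw [h3]
      cases l with
      | nil => simp at hc'
      | cons y l' => rw [List.getLast?_cons_cons]

lemma rt_nodup_chain {r : V → V → Prop} {a b : V} (h : Relation.ReflTransGen r a b) :
    ∃ l, List.Chain r a l ∧ (a :: l).getLast? = some b ∧ (a :: l).Nodup := by
  induction h using Relation.ReflTransGen.head_induction_on with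
  | refl => exact ⟨[], List.Chain.nil, by simp, by simp⟩
  | @head a c hr h' ih =>
    obtain ⟨l, hc, hl, hnd⟩ := ih
    by_cases hmem : a ∈ c :: l
    · rcases List.mem_cons.mp hmem with rfl | hmem'
      · exact ⟨l, hc, hl, hnd⟩
      · obtain ⟨l₂, h1, h2, h3⟩ := chain_suffix l c a hc hmem'
        refine ⟨l₂, h1, ?_, hnd.sublist (h2.trans (List.sublist_cons_self _ _))⟩
        · rw [h3]
          cases l with
          | nil => simp at hmem'
          | cons y l' => rw [← List.getLast?_cons_cons (a := c)]; exact hl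
    · exact ⟨c :: l, List.Chain.cons hr hc, by rwa [List.getLast?_cons_cons],
        by simp [hmem, hnd]⟩

lemma pick {r : V → V → Prop} (A : List V) :
    ∀ (n : ℕ) (l : List V) (c s : V), l.length ≤ n → List.Chain r c l →
      (c :: l).getLast? = some s → (c :: l).Nodup → c ∈ A →
      ∃ w l₂, List.Chain r w l₂ ∧ (w :: l₂).getLast? = some s ∧ (w :: l₂).Nodup ∧
        w ∈ A ∧ ∀ x ∈ l₂, x ∉ A := by
  intro n
  induction n with
  | zero =>
    intro l c s hlen hc hl hnd hA
    have hl0 : l = [] := by cases l with | nil => rfl | cons _ _ => simp at hlen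
    subst hl0
    exact ⟨c, [], List.Chain.nil, hl, hnd, hA, by simp⟩
  | succ n ih =>
    intro l c s hlen hc hl hnd hA
    by_cases hz : ∃ z ∈ l, z ∈ A
    · obtain ⟨z, hzl, hzA⟩ := hz
      obtain ⟨l₂, h1, h2, h3⟩ := chain_suffix l c z hc hzl
      have hlen2 : l₂.length ≤ n := by
        have := h2.length_le
        simp at this
        omega
      have hl2 : (z :: l₂).getLast? = some s := by
        rw [h3]
        cases l with
        | nil => simp at hzl
        | cons y l' => rw [← List.getLast?_cons_cons (a := c)]; exact hl
      exact ih l₂ z s hlen2 h1 hl2 (hnd.sublist (h2.trans (List.sublist_cons_self _ _))) hzA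
    · push_neg at hz
      exact ⟨c, l, hc, hl, hnd, hA, hz⟩

lemma truncW {H : MixedGraph V} {u v w : V} {l : List (Step V)}
    (h : W H u l v) (hw : w ∈ l.map (fun s => s.2.2)) :
    ∃ P₁ P₂, l = P₁ ++ P₂ ∧ W H u P₁ w ∧ P₁ ≠ [] := by
  induction h with
  | nil => simp at hw
  | @cons u x v k l hs hW ih =>
    by_cases hx : w = x
    · subst hx
      exact ⟨[(u, k, w)], l, rfl, W.cons hs (W.nil _), by simp⟩
    · have hw' : w ∈ l.map (fun s => s.2.2) := by
        have hw2 : w = x ∨ w ∈ l.map (fun s => s.2.2) := by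
          rw [List.map_cons] at hw
          exact List.mem_cons.mp hw
        rcases hw2 with h | h
        · exact absurd h hx
        · exact h
      obtain ⟨P₁, P₂, rfl, hW1, hne⟩ := ih hw'
      exact ⟨(u, k, x) :: P₁, P₂, rfl, W.cons hs hW1, by simp⟩

lemma extract {H : MixedGraph V} :
    ∀ (l : List (Step V)) (u v : V), W H u l v → ∀ c0, c0 ∈ colliders l →
      ∃ c P Q, l = P ++ Q ∧ W H u P c ∧ P ≠ [] ∧ (∀ x, x ∉ colliders P) ∧
        c ∈ colliders l := by
  intro l u v h
  induction h with
  | nil => intro c0 hc0; simp [colliders] at hc0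
  | @cons u x v k l hs hW ih =>
    intro c0 hc0
    cases hW with
    | nil => simp [colliders] at hc0
    | @cons x d v' k' l' hs' hW' =>
      by_cases hcol : headArrow k ∧ tailArrow k'
      · refine ⟨x, [(u, k, x)], (x, k', d) :: l', rfl, W.cons hs (W.nil _), by simp, ?_, ?_⟩
        · intro y hy; simp [colliders] at hy
        · exact Set.mem_union_left _ ⟨rfl, hcol.1, hcol.2⟩
      · have hc0' : c0 ∈ colliders ((x, k', d) :: l') := by
          rcases hc0 with ⟨rfl, h1, h2⟩ | h
          · exact absurd ⟨h1, h2⟩ hcol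
          · exact h
        obtain ⟨c, P, Q, heq, hWP, hne, hcolP, hcl⟩ := ih c0 hc0'
        match P, hne, heq, hWP, hcolP with
        | (p₁, p₂, p₃) :: P', _, heq, hWP, hcolP =>
          rw [List.cons_append] at heq
          injection heq with h1 h2
          injection h1 with e1 e23
          injection e23 with e2 e3
          subst e1
          subst e2
          subst e3
          subst h2
          refine ⟨c, (u, k, x) :: (x, k', d) :: P', Q, by simp, W.cons hs hWP,
            by simp, ?_, colliders_cons_sub _ _ hcl⟩
          intro y hy
          rcases hy with ⟨rfl, h1, h2⟩ | hy
          · exact hcol ⟨h1, h2⟩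
          · exact hcolP y hy

def stepsOf : V → List V → List (Step V)
  | _, [] => []
  | a, x :: l => (a, EKind.fw, x) :: stepsOf x l

lemma stepsOf_W {H : MixedGraph V} :
    ∀ (l : List V) (a z : V), List.Chain H.dir a l →
      (a :: l).getLast? = some z → W H a (stepsOf a l) z
  | [], a, z, _, hl => by
    have : a = z := by simpa using hl
    subst this
    exact W.nil a
  | x :: l, a, z, hch, hl => by
    have h := List.chain_cons.mp hch
    exact W.cons (show H.stepOK (a, EKind.fw, x) from h.1)
      (stepsOf_W l x z h.2 (by rwa [List.getLast?_cons_cons] at hl))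

lemma stepsOf_map : ∀ (l : List V) (a : V), (stepsOf a l).map (fun s => s.2.2) = l
  | [], _ => rfl
  | x :: l, a => by simp [stepsOf, stepsOf_map l x]

lemma stepsOf_fw : ∀ (l : List V) (a : V), ∀ st ∈ stepsOf a l, st.2.1 = EKind.fw
  | [], _, st, h => by simp [stepsOf] at h
  | x :: l, a, st, h => by
    rcases List.mem_cons.mp h with rfl | h
    · rfl
    · exact stepsOf_fw l x st h

lemma stepOK_under {G : MixedGraph V} {t : V} {st : Step V}
    (h : (G.under t).stepOK st) : G.stepOK st := by
  obtain ⟨a, k, b⟩ := st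
  cases k with
  | fw => exact h.1
  | bw => exact h.1
  | bd => exact h

end MGProof

open MixedGraph MGProof in
/-- If `t` is d-separated from `B` (unconditionally) in `G_underline(t)` and
`t` is d-separated from `Z` (unconditionally) in `G`, then `t` is d-separated
from `B` given `Z` in `G_underline(t)` (here `B, Z ⊆ V \ {t, y}` are disjoint). -/
theorem t_dsep_B_given_Z_in_under {V : Type} (G : MixedGraph V)
    (t y : V) (B Z : Set V)
    (htB : t ∉ B) (hyB : y ∉ B) (htZ : t ∉ Z) (hyZ : y ∉ Z)
    (hBZ : Disjoint B Z)
    (hsepZ : G.dSep {t} Z ∅)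
    (hsepB : (G.under t).dSep {t} B ∅) :
    (G.under t).dSep {t} B Z := by
  intro u hu b hb steps hpath hact
  rw [show u = t from hu] at hpath
  by_cases hcol : ∀ x, x ∉ colliders steps
  · exact hsepB t rfl b hb steps hpath
      ⟨fun w _ => Set.notMem_empty w, fun w hw => absurd hw (hcol w)⟩
  · push_neg at hcol
    obtain ⟨c0, hc0⟩ := hcol
    have hW := isPath_W steps t b hpath
    obtain ⟨c, P, Q, heq, hWP, hPne, hPcol, hcC⟩ := extract steps t b hW c0 hc0
    obtain ⟨s, hsZ, hdesc⟩ := hact.2 c hcC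
    have hndP : (verts t P).Nodup := by
      have hnd := hpath.nodup
      rw [heq] at hnd
      simp only [verts, List.map_append] at hnd
      have : (t :: P.map (fun s => s.2.2)).Nodup := by
        have := hnd
        rw [show t :: (P.map (fun s => s.2.2) ++ Q.map (fun s => s.2.2)) =
          (t :: P.map (fun s => s.2.2)) ++ Q.map (fun s => s.2.2) from rfl] at this
        exact this.of_append_left
      exact this
    obtain ⟨l, hch, hlast, hnd⟩ := rt_nodup_chain hdesc
    have hcA : c ∈ verts t P :=
      List.mem_cons_of_mem _ (W_mem_target hWP hPne)
    obtain ⟨w, l₂, hch₂, hlast₂, hnd₂, hwA, hl₂A⟩ :=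
      pick (verts t P) l.length l c s le_rfl hch hlast hnd hcA
    have hwt : w ≠ t := by
      cases l₂ with
      | nil =>
        intro h
        subst h
        have : w = s := by simpa using hlast₂
        exact htZ (this ▸ hsZ)
      | cons z l₂' =>
        have hdir : (G.under t).dir w z := (List.chain_cons.mp hch₂).1
        exact hdir.2
    have hwP : w ∈ P.map (fun st => st.2.2) := by
      rcases List.mem_cons.mp hwA with h | h
      · exact absurd h hwt
      · exact h
    obtain ⟨P₁, P₂, heqP, hWP₁, hP₁ne⟩ := truncW hWP hwP
    have hz : (w :: l₂).getLast? = some s := hlast₂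
    have hWQ : W (G.under t) w (stepsOf w l₂) s := stepsOf_W l₂ w s hch₂ hz
    have hWF : W (G.under t) t (P₁ ++ stepsOf w l₂) s := W_append hWP₁ hWQ
    have hFcol : ∀ x, x ∉ colliders (P₁ ++ stepsOf w l₂) := by
      intro x hx
      have hx' : x ∈ colliders P₁ :=
        colliders_append_fw P₁ (stepsOf w l₂) x (stepsOf_fw l₂ w) hx
      have : x ∈ colliders P := by
        rw [heqP]
        exact colliders_prefix_sub P₁ P₂ x hx'
      exact hPcol x this
    have hndF : (verts t (P₁ ++ stepsOf w l₂)).Nodup := by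
      have hmap : (P₁ ++ stepsOf w l₂).map (fun st => st.2.2) =
          P₁.map (fun st => st.2.2) ++ l₂ := by
        rw [List.map_append, stepsOf_map]
      show (t :: (P₁ ++ stepsOf w l₂).map (fun st => st.2.2)).Nodup
      rw [hmap]
      rw [show t :: (P₁.map (fun st => st.2.2) ++ l₂) =
        (t :: P₁.map (fun st => st.2.2)) ++ l₂ from rfl]
      have hndP₁ : (t :: P₁.map (fun st => st.2.2)).Nodup := by
        have : (verts t P).Nodup := hndP
        rw [heqP] at this
        simp only [verts, List.map_append] at this
        rw [show t :: (P₁.map (fun st => st.2.2) ++ P₂.map (fun st => st.2.2)) =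
          (t :: P₁.map (fun st => st.2.2)) ++ P₂.map (fun st => st.2.2) from rfl] at this
        exact this.of_append_left
      have hndl₂ : l₂.Nodup := hnd₂.of_cons
      rw [List.nodup_append]
      refine ⟨hndP₁, hndl₂, ?_⟩
      intro x hx x' hx2 hxx'
      subst hxx'
      have hxP : x ∈ verts t P := by
        rcases List.mem_cons.mp hx with rfl | hx'
        · exact List.mem_cons_self
        · refine List.mem_cons_of_mem _ ?_
          rw [heqP, List.map_append]
          exact List.mem_append_left _ hx'
      exact hl₂A x hx2 hxP
    have hFne : P₁ ++ stepsOf w l₂ ≠ [] := by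
      cases P₁ with
      | nil => exact absurd rfl hP₁ne
      | cons a l => simp
    have hpathF : (G.under t).IsPath t s (P₁ ++ stepsOf w l₂) :=
      W_isPath hWF hFne hndF
    have hpathG : G.IsPath t s (P₁ ++ stepsOf w l₂) :=
      ⟨hpathF.nonempty, hpathF.startOK, hpathF.endOK, hpathF.chain,
        fun st hst => stepOK_under (hpathF.edges st hst), hpathF.nodup⟩
    exact hsepZ t rfl s hsZ _ hpathG
      ⟨fun w' _ => Set.notMem_empty w', fun w' hw' => absurd hw' (hFcol w')⟩
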